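/- Let μ ∈ ℝ, σ > 0 and ρ > 0, and let q(x) = 2 φ_{μ,σ²}(x) Φ((x - μ)/√(σ² + ρ²)). Then the mean of the distribution with density q is ∫_{-∞}^{+∞} x q(x) dx = μ + 2σ²/√(2π(2σ² + ρ²)). -/

import Mathlib

open MeasureTheory Real

/-- The density of the standard normal distribution. -/
noncomputable def stdGaussianPDF (x : ℝ) : ℝ :=
  (Real.sqrt (2 * Real.pi))⁻¹ * Real.exp (-x ^ 2 / 2)

/-- The cumulative distribution function of the standard normal distribution. -/
noncomputable def stdGaussianCDF (x : ℝ) : ℝ :=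
  ∫ t in Set.Iic x, stdGaussianPDF t

/-- The density of the normal distribution with mean `μ` and variance `σ²`. -/
noncomputable def normalPDF (μ σ : ℝ) (x : ℝ) : ℝ :=
  (σ * Real.sqrt (2 * Real.pi))⁻¹ * Real.exp (-(x - μ) ^ 2 / (2 * σ ^ 2))

/-!
Substituting `x = μ + σ y` turns the mean into `2μ ∫ φ(y) Φ(a y) dy + 2σ ∫ y φ(y) Φ(a y) dy`
with `a = σ / √(σ² + ρ²)`. The first integral is `1/2` because `y ↦ φ(y) (Φ(a y) - 1/2)` is odd.
Since `φ' = -y φ`, integrating the second by parts gives `a ∫ φ(y) φ(a y) dy`, a Gaussian integral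
equal to `a / √(2π(1 + a²))`.
-/

open Set

lemma stdGaussianPDF_eq (x : ℝ) :
    stdGaussianPDF x = (√(2 * π))⁻¹ * rexp (-(1 / 2) * x ^ 2) := by
  rw [stdGaussianPDF]; ring_nf

lemma continuous_stdGaussianPDF : Continuous stdGaussianPDF := by
  unfold stdGaussianPDF; fun_prop

lemma stdGaussianPDF_nonneg (x : ℝ) : 0 ≤ stdGaussianPDF x := by
  unfold stdGaussianPDF; positivity

lemma stdGaussianPDF_neg (x : ℝ) : stdGaussianPDF (-x) = stdGaussianPDF x := by
  simp [stdGaussianPDF]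

lemma integrable_stdGaussianPDF : Integrable stdGaussianPDF := by
  simp_rw [funext stdGaussianPDF_eq]
  exact (integrable_exp_neg_mul_sq (by norm_num)).const_mul _

lemma integral_stdGaussianPDF : ∫ x, stdGaussianPDF x = 1 := by
  simp_rw [stdGaussianPDF_eq]
  rw [integral_const_mul, integral_gaussian, show π / (1 / 2) = 2 * π by ring]
  exact inv_mul_cancel₀ (by positivity)

lemma integrable_mul_stdGaussianPDF : Integrable fun x ↦ x * stdGaussianPDF x := by
  simp_rw [stdGaussianPDF_eq, mul_left_comm _ (√(2 * π))⁻¹]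
  exact (integrable_mul_exp_neg_mul_sq (by norm_num)).const_mul _

lemma hasDerivAt_stdGaussianPDF (x : ℝ) :
    HasDerivAt stdGaussianPDF (-x * stdGaussianPDF x) x := by
  simp_rw [funext stdGaussianPDF_eq]
  have := (((hasDerivAt_pow 2 x).const_mul (-(1 / 2))).exp).const_mul (√(2 * π))⁻¹
  exact this.congr_deriv (by push_cast; ring)

lemma stdGaussianCDF_nonneg (x : ℝ) : 0 ≤ stdGaussianCDF x :=
  setIntegral_nonneg measurableSet_Iic fun t _ ↦ stdGaussianPDF_nonneg t

lemma stdGaussianCDF_le_one (x : ℝ) : stdGaussianCDF x ≤ 1 :=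
  integral_stdGaussianPDF ▸
    setIntegral_le_integral integrable_stdGaussianPDF (.of_forall stdGaussianPDF_nonneg)

lemma hasDerivAt_stdGaussianCDF (x : ℝ) :
    HasDerivAt stdGaussianCDF (stdGaussianPDF x) x := by
  have h : stdGaussianCDF = fun y ↦ stdGaussianCDF 0 + ∫ t in (0 : ℝ)..y, stdGaussianPDF t := by
    funext y
    rw [stdGaussianCDF, stdGaussianCDF, ← intervalIntegral.integral_Iic_sub_Iic
      integrable_stdGaussianPDF.integrableOn integrable_stdGaussianPDF.integrableOn]
    ring
  rw [h]
  exact (intervalIntegral.integral_hasDerivAt_right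
    (continuous_stdGaussianPDF.intervalIntegrable _ _)
    (continuous_stdGaussianPDF.stronglyMeasurableAtFilter _ _)
    continuous_stdGaussianPDF.continuousAt).const_add _

lemma continuous_stdGaussianCDF : Continuous stdGaussianCDF :=
  continuous_iff_continuousAt.2 fun x ↦ (hasDerivAt_stdGaussianCDF x).continuousAt

lemma stdGaussianCDF_neg (x : ℝ) : stdGaussianCDF (-x) = 1 - stdGaussianCDF x := by
  have hIoi : stdGaussianCDF (-x) = ∫ t in Ioi x, stdGaussianPDF t := by
    rw [stdGaussianCDF, ← neg_neg x, ← integral_comp_neg_Iic, neg_neg]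
    simp_rw [stdGaussianPDF_neg]
  rw [hIoi, stdGaussianCDF, ← integral_stdGaussianPDF, ← intervalIntegral.integral_Iic_add_Ioi
    integrable_stdGaussianPDF.integrableOn integrable_stdGaussianPDF.integrableOn (b := x)]
  ring

lemma MeasureTheory.Integrable.mul_stdGaussianCDF_comp_mul {g : ℝ → ℝ} (hg : Integrable g)
    (a : ℝ) :
    Integrable fun y ↦ g y * stdGaussianCDF (a * y) := by
  refine hg.mul_bdd (c := 1)
    (continuous_stdGaussianCDF.comp (continuous_const_mul a)).aestronglyMeasurable
    (.of_forall fun y ↦ ?_)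
  rw [norm_eq_abs, abs_le]
  exact ⟨by linarith [stdGaussianCDF_nonneg (a * y)], stdGaussianCDF_le_one _⟩

lemma stdGaussianPDF_mul_stdGaussianPDF_mul (a y : ℝ) :
    stdGaussianPDF y * stdGaussianPDF (a * y)
      = (2 * π)⁻¹ * rexp (-((1 + a ^ 2) / 2) * y ^ 2) := by
  rw [stdGaussianPDF, stdGaussianPDF, mul_mul_mul_comm, ← mul_inv,
    mul_self_sqrt (by positivity), ← exp_add]
  ring_nf

lemma integrable_stdGaussianPDF_mul_stdGaussianPDF_mul (a : ℝ) :
    Integrable fun y ↦ stdGaussianPDF y * stdGaussianPDF (a * y) := by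
  simp_rw [stdGaussianPDF_mul_stdGaussianPDF_mul]
  exact (integrable_exp_neg_mul_sq (by positivity)).const_mul _

lemma integral_stdGaussianPDF_mul_stdGaussianPDF_mul (a : ℝ) :
    ∫ y, stdGaussianPDF y * stdGaussianPDF (a * y) = (√(2 * π * (1 + a ^ 2)))⁻¹ := by
  simp_rw [stdGaussianPDF_mul_stdGaussianPDF_mul]
  have h2π : 0 < 2 * π := by positivity
  rw [integral_const_mul, integral_gaussian, show π / ((1 + a ^ 2) / 2)
    = (2 * π) ^ 2 / (2 * π * (1 + a ^ 2)) by field_simp, sqrt_div' _ (by positivity),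
    sqrt_sq h2π.le, ← mul_div_assoc, inv_mul_cancel₀ h2π.ne', one_div]

lemma integral_stdGaussianPDF_mul_stdGaussianCDF_mul (a : ℝ) :
    ∫ y, stdGaussianPDF y * stdGaussianCDF (a * y) = 1 / 2 := by
  have hsymm : ∫ y, stdGaussianPDF y * stdGaussianCDF (a * y)
      = ∫ y, stdGaussianPDF y * (1 - stdGaussianCDF (a * y)) := by
    rw [← integral_neg_eq_self]
    simp_rw [stdGaussianPDF_neg, mul_neg, stdGaussianCDF_neg]
  simp_rw [mul_one_sub] at hsymm
  rw [integral_sub integrable_stdGaussianPDF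
    (integrable_stdGaussianPDF.mul_stdGaussianCDF_comp_mul a), integral_stdGaussianPDF] at hsymm
  linarith

lemma integral_mul_stdGaussianPDF_mul_stdGaussianCDF_mul (a : ℝ) :
    ∫ y, y * stdGaussianPDF y * stdGaussianCDF (a * y) = a / √(2 * π * (1 + a ^ 2)) := by
  have hv (y : ℝ) : HasDerivAt (fun t ↦ stdGaussianCDF (a * t)) (a * stdGaussianPDF (a * y)) y :=
    ((hasDerivAt_stdGaussianCDF (a * y)).comp y ((hasDerivAt_id y).const_mul a)).congr_deriv
      (by simp [mul_comm])
  have hparts := integral_mul_deriv_eq_deriv_mul_of_integrable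
    (fun y _ ↦ hasDerivAt_stdGaussianPDF y) (fun y _ ↦ hv y) ?_ ?_ ?_
  · simp only [mul_left_comm _ a, integral_const_mul, neg_mul, integral_neg, neg_neg] at hparts
    rw [← hparts, integral_stdGaussianPDF_mul_stdGaussianPDF_mul, div_eq_mul_inv]
  · exact ((integrable_stdGaussianPDF_mul_stdGaussianPDF_mul a).const_mul a).congr
      (.of_forall fun y ↦ by simp only [Pi.mul_apply]; ring)
  · exact (integrable_mul_stdGaussianPDF.mul_stdGaussianCDF_comp_mul a).neg.congr
      (.of_forall fun y ↦ by simp only [Pi.mul_apply, Pi.neg_apply]; ring)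
  · exact integrable_stdGaussianPDF.mul_stdGaussianCDF_comp_mul a

lemma integral_comp_add_mul_of_pos (f : ℝ → ℝ) (μ : ℝ) {σ : ℝ} (hσ : 0 < σ) :
    ∫ x, f x = σ * ∫ y, f (μ + σ * y) := by
  rw [Measure.integral_comp_mul_left (fun u ↦ f (μ + u)), integral_add_left_eq_self,
    abs_of_pos (inv_pos.2 hσ), smul_eq_mul, mul_inv_cancel_left₀ hσ.ne']

lemma normalPDF_add_mul (μ : ℝ) {σ : ℝ} (hσ : σ ≠ 0) (y : ℝ) :
    normalPDF μ σ (μ + σ * y) = σ⁻¹ * stdGaussianPDF y := by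
  rw [normalPDF, stdGaussianPDF, mul_inv, add_sub_cancel_left, mul_pow,
    show -(σ ^ 2 * y ^ 2) / (2 * σ ^ 2) = -y ^ 2 / 2 by field_simp]
  ring

theorem winner_density_mean_general (μ σ ρ : ℝ) (hσ : 0 < σ) :
    ∫ x, x * (2 * normalPDF μ σ x
        * stdGaussianCDF ((x - μ) / Real.sqrt (σ ^ 2 + ρ ^ 2)))
      = μ + 2 * σ ^ 2 / Real.sqrt (2 * Real.pi * (2 * σ ^ 2 + ρ ^ 2)) := by
  obtain ⟨s, hs_def⟩ : ∃ s, √(σ ^ 2 + ρ ^ 2) = s := ⟨_, rfl⟩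
  have hs : 0 < s := hs_def ▸ sqrt_pos.2 (by positivity)
  have hs2 : s ^ 2 = σ ^ 2 + ρ ^ 2 := hs_def ▸ sq_sqrt (by positivity)
  rw [hs_def]
  have hsub : ∫ x, x * (2 * normalPDF μ σ x * stdGaussianCDF ((x - μ) / s))
      = ∫ y, (2 * μ * (stdGaussianPDF y * stdGaussianCDF (σ / s * y))
          + 2 * σ * (y * stdGaussianPDF y * stdGaussianCDF (σ / s * y))) := by
    rw [integral_comp_add_mul_of_pos _ μ hσ, ← integral_const_mul]
    congr 1 with y
    rw [normalPDF_add_mul μ hσ.ne', add_sub_cancel_left, mul_div_right_comm]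
    field_simp
  have hsqrt : √(2 * π * (1 + (σ / s) ^ 2)) = √(2 * π * (2 * σ ^ 2 + ρ ^ 2)) / s := by
    have h : 2 * π * (1 + (σ / s) ^ 2) = 2 * π * (2 * σ ^ 2 + ρ ^ 2) / s ^ 2 := by
      field_simp
      rw [hs2]
      ring
    rw [h, sqrt_div' _ (sq_nonneg s), sqrt_sq hs.le]
  rw [hsub, integral_add ((integrable_stdGaussianPDF.mul_stdGaussianCDF_comp_mul _).const_mul _)
      ((integrable_mul_stdGaussianPDF.mul_stdGaussianCDF_comp_mul _).const_mul _),
    integral_const_mul, integral_const_mul, integral_stdGaussianPDF_mul_stdGaussianCDF_mul,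
    integral_mul_stdGaussianPDF_mul_stdGaussianCDF_mul, hsqrt]
  field_simp

/-- The mean of the density `q(x) = 2 φ_{μ,σ²}(x) Φ((x-μ)/√(σ²+ρ²))` is
`μ + 2σ²/√(2π(2σ²+ρ²))`. -/
theorem winner_density_mean (μ σ ρ : ℝ) (hσ : 0 < σ) (hρ : 0 < ρ) :
    ∫ x, x * (2 * normalPDF μ σ x
        * stdGaussianCDF ((x - μ) / Real.sqrt (σ ^ 2 + ρ ^ 2)))
      = μ + 2 * σ ^ 2 / Real.sqrt (2 * Real.pi * (2 * σ ^ 2 + ρ ^ 2)) :=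
  winner_density_mean_general μ σ ρ hσ
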